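/- Fix M > 1, T₀ ∈ (0,1), m ≥ 1, φ(t) = (2/(m+2))t^((m+2)/2), and let ν = M - 1 + φ(3T₀/8). Then there exists δ > 0 such that for all t ≥ T₀/4 and all x = (x₁, x') ∈ ℝ × ℝ^(n-1) with |x - (ν,0,…,0)| ≤ φ(t) - φ(T₀/4), one has φ(t)² - |x - (ν,0,…,0)|² ≥ δ·((φ(t)+M)² - |x|²). -/
import Mathlib


/-- The generalized distance function for the Tricomi operator. -/
noncomputable def phi (m : ℕ) (t : ℝ) : ℝ := (2 / ((m : ℝ) + 2)) * t ^ (((m : ℝ) + 2) / 2)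

set_option maxHeartbeats 1000000 in
/-- The shifted-cone case of inequality (3.7): for the shift vector `v` of norm
`ν = M - 1 + φ(3T₀/8)`, inside the shifted cusp cone `|x - v| ≤ φ(t) - φ(T₀/4)`, `t ≥ T₀/4`,
the weight `φ(t)² - |x - v|²` dominates a fixed multiple of `(φ(t)+M)² - |x|²`. -/
theorem stmt_7 (m n : ℕ) (hm : 1 ≤ m) (M T₀ : ℝ) (hM : 1 < M)
    (hT₀ : T₀ ∈ Set.Ioo (0 : ℝ) 1)
    (v : EuclideanSpace ℝ (Fin n)) (hv : ‖v‖ = M - 1 + phi m (3 * T₀ / 8)) :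
    ∃ δ > 0, ∀ t : ℝ, T₀ / 4 ≤ t → ∀ x : EuclideanSpace ℝ (Fin n),
      ‖x - v‖ ≤ phi m t - phi m (T₀ / 4) →
      (phi m t) ^ 2 - ‖x - v‖ ^ 2 ≥ δ * ((phi m t + M) ^ 2 - ‖x‖ ^ 2) := by
  obtain ⟨hT, hT1⟩ := hT₀
  set a := phi m (T₀ / 4) with ha_def
  have ha : 0 < a := by
    have h4 : (0:ℝ) < T₀ / 4 := by linarith
    have := Real.rpow_pos_of_pos h4 (((m : ℝ) + 2) / 2)
    have hden : (0:ℝ) < (m:ℝ) + 2 := by positivity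
    unfold a; unfold phi
    positivity
  -- φ(3T₀/8) bounds
  have hφ3nn : 0 ≤ phi m (3 * T₀ / 8) := by
    unfold phi
    have h8 : (0:ℝ) ≤ 3 * T₀ / 8 := by linarith
    have := Real.rpow_nonneg h8 (((m : ℝ) + 2) / 2)
    positivity
  have hφ3le : phi m (3 * T₀ / 8) ≤ 1 := by
    unfold phi
    have h8 : (0:ℝ) ≤ 3 * T₀ / 8 := by linarith
    have h81 : 3 * T₀ / 8 ≤ 1 := by linarith
    have hexp : 0 ≤ ((m : ℝ) + 2) / 2 := by positivity
    have hr : (3 * T₀ / 8) ^ (((m : ℝ) + 2) / 2) ≤ 1 :=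
      Real.rpow_le_one h8 h81 hexp
    have hc : 2 / ((m : ℝ) + 2) ≤ 1 := by
      rw [div_le_one (by positivity)]
      have : (1:ℝ) ≤ (m:ℝ) := by exact_mod_cast hm
      linarith
    calc 2 / ((m : ℝ) + 2) * (3 * T₀ / 8) ^ (((m : ℝ) + 2) / 2)
        ≤ 1 * 1 := by
          apply mul_le_mul hc hr (Real.rpow_nonneg h8 _) (by norm_num)
      _ = 1 := by norm_num
  set ν := ‖v‖ with hν_def
  have hνnn : 0 ≤ ν := norm_nonneg v
  have hνM : ν ≤ M := by linarith
  have hMν : M - ν ≤ 1 := by linarith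
  refine ⟨a ^ 2 / ((a + 1) * (a + M + ν)), by positivity, ?_⟩
  intro t ht x hx
  set φ := phi m t with hφ_def
  set r := ‖x - v‖ with hr_def
  have hr : 0 ≤ r := norm_nonneg _
  have hφr : a + r ≤ φ := by linarith
  have hxn : (r - ν) ^ 2 ≤ ‖x‖ ^ 2 := by
    have h := abs_norm_sub_norm_le (x - v) (-v)
    have h2 : ‖(x - v) - (-v)‖ = ‖x‖ := by
      congr 1
      abel
    rw [h2, norm_neg] at h
    calc (r - ν) ^ 2 = |r - ν| ^ 2 := (sq_abs _).symm
      _ ≤ ‖x‖ ^ 2 := by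
          apply pow_le_pow_left₀ (abs_nonneg _) h
  have f1 : a * (φ + M + r - ν) ≤ (a + 1) * (φ + r) := by nlinarith
  have f2 : a * (φ + M + ν - r) ≤ (a + M + ν) * (φ - r) := by nlinarith
  have hA : 0 ≤ a * (φ + M + r - ν) := by nlinarith
  have hB : 0 ≤ (a + 1) * (φ + r) := by nlinarith
  have key : (a * (φ + M + r - ν)) * (a * (φ + M + ν - r)) ≤
      ((a + 1) * (φ + r)) * ((a + M + ν) * (φ - r)) := by
    apply mul_le_mul f1 f2 ?_ hB
    nlinarith
  rw [ge_iff_le, div_mul_eq_mul_div, div_le_iff₀ (by positivity)]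
  nlinarith [key, mul_le_mul_of_nonneg_left hxn (sq_nonneg a)]
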